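/- arXiv:2007.01119 — 3 statements merged into one kernel-verified Lean document; each statement's English description precedes it below -/
import Mathlib

section
/- Let T be a contraction on a Hilbert space H and f ∈ H. Define P_n(f) = ⟨T^n f, f⟩ for n ≥ 0 and P_n(f) = conjugate(P_{-n}(f)) for n < 0. Then the sequence (P_n(f))_{n∈ℤ} is non-negative definite, i.e., for any finitely supported complex sequence (c_n), ∑_{m,n} c_m conj(c_n) P_{m-n}(f) ≥ 0. -/
/-!
For `k` bounding `s`, put `v_k = ∑_{n ∈ s} c_n T^{k-n} f`. Adjoining to `s` a new largest index `a`
replaces `v_a` by `v_a + c_a f`, and the cross terms of `‖v_a + c_a f‖²` are exactly the terms the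
form gains; so the form minus `‖v_a‖²` does not change. As `T` is a contraction, `‖v_k‖` decreases
in `k`, and induction on `s` shows that the form dominates `‖v_k‖² ≥ 0`.
-/

open scoped ComplexConjugate ComplexOrder

def toeplitzForm (P : ℤ → ℂ) (s : Finset ℤ) (c : ℤ → ℂ) : ℂ :=
  ∑ m ∈ s, ∑ n ∈ s, c m * conj (c n) * P (m - n)

lemma toeplitzForm_insert (P : ℤ → ℂ) {s : Finset ℤ} (c : ℤ → ℂ) {a : ℤ} (ha : a ∉ s) :
    toeplitzForm P (insert a s) c = toeplitzForm P s c + c a * conj (c a) * P 0 +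
      ∑ n ∈ s, (c a * conj (c n) * P (a - n) + c n * conj (c a) * P (n - a)) := by
  simp only [toeplitzForm, Finset.sum_insert ha, sub_self, Finset.sum_add_distrib]
  ring

lemma ContinuousLinearMap.norm_pow_apply_le_of_norm_apply_le
    {E 𝕜 : Type*} [NontriviallyNormedField 𝕜] [SeminormedAddCommGroup E] [NormedSpace 𝕜 E]
    {T : E →L[𝕜] E} (hT : ∀ x, ‖T x‖ ≤ ‖x‖) (j : ℕ) (x : E) : ‖(T ^ j) x‖ ≤ ‖x‖ := by
  induction j with
  | zero => simp
  | succ j ih =>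
    rw [pow_succ', mul_apply_eq_comp]
    exact (hT _).trans ih

section Orbit

variable {H : Type*} [NormedAddCommGroup H] [InnerProductSpace ℂ H]

-- The exponent `(k - n).toNat` truncates at `0`; we only use `k` bounding `s`.
def orbitCombination (T : H →L[ℂ] H) (f : H) (s : Finset ℤ) (c : ℤ → ℂ) (k : ℤ) : H :=
  ∑ n ∈ s, c n • (T ^ (k - n).toNat) f

variable (T : H →L[ℂ] H) (f : H) (c : ℤ → ℂ)

lemma orbitCombination_insert_self {s : Finset ℤ} {a : ℤ} (ha : a ∉ s) :
    orbitCombination T f (insert a s) c a = orbitCombination T f s c a + c a • f := by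
  simp [orbitCombination, Finset.sum_insert ha, add_comm]

lemma orbitCombination_eq_pow_apply {s : Finset ℤ} {a k : ℤ} (hs : ∀ n ∈ s, n ≤ a)
    (hak : a ≤ k) :
    orbitCombination T f s c k = (T ^ (k - a).toNat) (orbitCombination T f s c a) := by
  simp only [orbitCombination, map_sum, map_smul]
  refine Finset.sum_congr rfl fun n hn => ?_
  rw [← mul_apply_eq_comp, ← pow_add]
  congr 3
  have hna := hs n hn
  omega

variable {T f} {P : ℤ → ℂ}

lemma apply_sub_eq_inner_pow_left (hP0 : ∀ n : ℕ, P n = inner ℂ ((T ^ n) f) f) {m n : ℤ}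
    (h : n ≤ m) :
    P (m - n) = inner ℂ ((T ^ (m - n).toNat) f) f := by
  rw [← hP0, Int.toNat_of_nonneg (sub_nonneg.2 h)]

lemma apply_sub_eq_inner_pow_right (hP0 : ∀ n : ℕ, P n = inner ℂ ((T ^ n) f) f)
    (hPneg : ∀ n : ℤ, n < 0 → P n = conj (P (-n))) {m n : ℤ} (h : n ≤ m) :
    P (n - m) = inner ℂ f ((T ^ (m - n).toNat) f) := by
  rcases h.lt_or_eq with h | rfl
  · rw [hPneg _ (by omega), neg_sub, apply_sub_eq_inner_pow_left hP0 h.le, inner_conj_symm]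
  · simpa using hP0 0

lemma inner_self_orbitCombination_add_smul (hP0 : ∀ n : ℕ, P n = inner ℂ ((T ^ n) f) f)
    (hPneg : ∀ n : ℤ, n < 0 → P n = conj (P (-n))) {s : Finset ℤ} {a : ℤ}
    (hs : ∀ n ∈ s, n < a) :
    inner ℂ (orbitCombination T f s c a + c a • f) (orbitCombination T f s c a + c a • f) =
      inner ℂ (orbitCombination T f s c a) (orbitCombination T f s c a) +
        (toeplitzForm P (insert a s) c - toeplitzForm P s c) := by
  have ha : a ∉ s := fun h => (hs a h).false
  have h_self : inner ℂ (c a • f) (c a • f) = c a * conj (c a) * P 0 := by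
    have hP_zero : P 0 = inner ℂ f f := by simpa using hP0 0
    rw [inner_smul_left, inner_smul_right, hP_zero]
    ring
  have h_left : inner ℂ (orbitCombination T f s c a) (c a • f) =
      ∑ n ∈ s, c a * conj (c n) * P (a - n) := by
    simp only [orbitCombination, sum_inner, inner_smul_left, inner_smul_right, Finset.mul_sum]
    refine Finset.sum_congr rfl fun n hn => ?_
    rw [apply_sub_eq_inner_pow_left hP0 (hs n hn).le]
    ring
  have h_right : inner ℂ (c a • f) (orbitCombination T f s c a) =
      ∑ n ∈ s, c n * conj (c a) * P (n - a) := by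
    simp only [orbitCombination, inner_sum, inner_smul_left, inner_smul_right]
    refine Finset.sum_congr rfl fun n hn => ?_
    rw [apply_sub_eq_inner_pow_right hP0 hPneg (hs n hn).le]
    ring
  simp only [inner_add_left, inner_add_right, h_self, h_left, h_right,
    toeplitzForm_insert P c ha, Finset.sum_add_distrib]
  ring

lemma inner_self_orbitCombination_le_of_le (hT : ∀ x, ‖T x‖ ≤ ‖x‖) {s : Finset ℤ} {a k : ℤ}
    (hs : ∀ n ∈ s, n ≤ a) (hak : a ≤ k) :
    inner ℂ (orbitCombination T f s c k) (orbitCombination T f s c k) ≤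
      inner ℂ (orbitCombination T f s c a) (orbitCombination T f s c a) := by
  rw [inner_self_eq_norm_sq_to_K, inner_self_eq_norm_sq_to_K,
    orbitCombination_eq_pow_apply T f c hs hak]
  norm_cast
  gcongr
  exact ContinuousLinearMap.norm_pow_apply_le_of_norm_apply_le hT _ _

lemma inner_self_orbitCombination_le_toeplitzForm (hT : ∀ x, ‖T x‖ ≤ ‖x‖)
    (hP0 : ∀ n : ℕ, P n = inner ℂ ((T ^ n) f) f) (hPneg : ∀ n : ℤ, n < 0 → P n = conj (P (-n)))
    (s : Finset ℤ) {k : ℤ} (hk : ∀ n ∈ s, n ≤ k) :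
    inner ℂ (orbitCombination T f s c k) (orbitCombination T f s c k) ≤ toeplitzForm P s c := by
  induction s using Finset.induction_on_max generalizing k with
  | empty => simp [orbitCombination, toeplitzForm]
  | insert a s hs ih =>
    have ha : a ∉ s := fun h => (hs a h).false
    calc inner ℂ (orbitCombination T f (insert a s) c k) (orbitCombination T f (insert a s) c k)
        ≤ inner ℂ (orbitCombination T f (insert a s) c a) (orbitCombination T f (insert a s) c a) :=
          inner_self_orbitCombination_le_of_le c hT
            (Finset.forall_mem_insert _ _ _ |>.2 ⟨le_rfl, fun n hn => (hs n hn).le⟩)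
            (hk a (Finset.mem_insert_self a s))
      _ = inner ℂ (orbitCombination T f s c a) (orbitCombination T f s c a) +
            (toeplitzForm P (insert a s) c - toeplitzForm P s c) := by
          rw [orbitCombination_insert_self T f c ha,
            inner_self_orbitCombination_add_smul c hP0 hPneg hs]
      _ ≤ toeplitzForm P s c + (toeplitzForm P (insert a s) c - toeplitzForm P s c) := by
          gcongr
          exact ih fun n hn => (hs n hn).le
      _ = toeplitzForm P (insert a s) c := add_sub_cancel _ _

end Orbit

theorem stmt_0_general
    {H : Type*} [NormedAddCommGroup H] [InnerProductSpace ℂ H]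
    (T : H →L[ℂ] H) (hT : ∀ f : H, ‖T f‖ ≤ ‖f‖)
    (f : H) (P : ℤ → ℂ)
    (hP0 : ∀ n : ℕ, P (n : ℤ) = inner ℂ ((T ^ n) f) f)
    (hPneg : ∀ n : ℤ, n < 0 → P n = conj (P (-n))) :
    ∀ (s : Finset ℤ) (c : ℤ → ℂ),
      0 ≤ (∑ m ∈ s, ∑ n ∈ s, c m * conj (c n) * P (m - n)).re ∧
      (∑ m ∈ s, ∑ n ∈ s, c m * conj (c n) * P (m - n)).im = 0 := by
  intro s c
  obtain ⟨k, hk⟩ := s.bddAbove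
  set v := orbitCombination T f s c k
  have h_inner_nonneg : 0 ≤ inner ℂ v v := by
    rw [inner_self_eq_norm_sq_to_K]
    positivity
  obtain ⟨h_re, h_im⟩ := Complex.nonneg_iff.1 <| h_inner_nonneg.trans <|
    inner_self_orbitCombination_le_toeplitzForm c hT hP0 hPneg s fun n hn => hk hn
  exact ⟨h_re, h_im.symm⟩

/-- The spectral sequence `P_n(f) = ⟨T^n f, f⟩` (with `P_{-n} = conj (P_n)`) of a
contraction `T` on a Hilbert space is non-negative definite. -/
theorem stmt_0
    {H : Type*} [NormedAddCommGroup H] [InnerProductSpace ℂ H] [CompleteSpace H]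
    (T : H →L[ℂ] H) (hT : ∀ f : H, ‖T f‖ ≤ ‖f‖)
    (f : H) (P : ℤ → ℂ)
    (hP0 : ∀ n : ℕ, P (n : ℤ) = inner ℂ ((T ^ n) f) f)
    (hPneg : ∀ n : ℤ, n < 0 → P n = conj (P (-n))) :
    ∀ (s : Finset ℤ) (c : ℤ → ℂ),
      0 ≤ (∑ m ∈ s, ∑ n ∈ s, c m * conj (c n) * P (m - n)).re ∧
      (∑ m ∈ s, ∑ n ∈ s, c m * conj (c n) * P (m - n)).im = 0 :=
  stmt_0_general T hT f P hP0 hPneg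
end

section
/- Let 0 < δ < 1. There exists a constant C = C(δ) such that for all integers N ≥ 2 and all real θ, |∑_{k=1}^{N} e^{2iπ(k^δ + θk)}| ≤ C N^{1−δ/2}. -/
/-!
The phase `f x = x ^ δ + θ * x` has derivative `g x = δ * x ^ (δ - 1) + θ`, which on `[1, N]`
decreases with slope at most `-κ`, `κ = δ (1 - δ) N ^ (δ - 2)`, and has range of length `< δ`.
If `2Δ ≤ 1 - δ`, there is one integer `k` such that outside the window `|g - k| ≤ Δ` the
derivative keeps distance `≥ Δ` from `ℤ`. On the two pieces outside the window the Kusmin–Landau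
inequality bounds the sum by `O(1 / Δ)`, and the window contains at most `1 + 2Δ / κ` integers.
With `Δ = N ^ (δ / 2 - 1)` everything is `O(N ^ (1 - δ / 2))`; when `2Δ > 1 - δ` instead,
`N ^ (1 - δ / 2) < 2 / (1 - δ)` and the trivial bound `N` suffices.

Kusmin–Landau: with `t = f (n + 1) - f n`, `e (f n) = (e (f (n + 1)) - e (f n)) (e t - 1)⁻¹` and
`(e t - 1)⁻¹ = -1/2 - (i/2) cot (π t)`. Abel summation against these weights costs only their
total variation, which telescopes because both `t` and `cot` are monotone.
-/

open Real Finset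

namespace Real

lemma two_mul_le_sin_pi_mul {Δ t : ℝ} (hΔ : 0 ≤ Δ) (h₁ : Δ ≤ t) (h₂ : t ≤ 1 - Δ) :
    2 * Δ ≤ sin (π * t) := by
  have jordan {u : ℝ} (hu₀ : 0 ≤ u) (hu₁ : u ≤ 1 / 2) : 2 * u ≤ sin (π * u) := by
    have := mul_le_sin (by positivity : 0 ≤ π * u) (by nlinarith [pi_pos])
    rwa [← mul_assoc, div_mul_cancel₀ _ pi_ne_zero] at this
  rcases le_total t (1 / 2) with h | h
  · linarith [jordan (hΔ.trans h₁) h]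
  · rw [← sin_pi_sub, show π - π * t = π * (1 - t) by ring]
    linarith [jordan (by linarith) (by linarith : 1 - t ≤ 1 / 2)]

lemma abs_cot_pi_mul_le {Δ t : ℝ} (hΔ : 0 < Δ) (h₁ : Δ ≤ t) (h₂ : t ≤ 1 - Δ) :
    |cot (π * t)| ≤ 1 / (2 * Δ) := by
  have hsin := two_mul_le_sin_pi_mul hΔ.le h₁ h₂
  rw [cot_eq_cos_div_sin, abs_div, abs_of_pos (by linarith : 0 < sin (π * t))]
  exact div_le_div₀ zero_le_one (abs_cos_le_one _) (by positivity) hsin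

lemma cot_le_cot {x y : ℝ} (hx : 0 < x) (hxy : x ≤ y) (hy : y < π) : cot y ≤ cot x := by
  have hsx : 0 < sin x := sin_pos_of_pos_of_lt_pi hx (by linarith)
  have hsy : 0 < sin y := sin_pos_of_pos_of_lt_pi (by linarith) hy
  rw [cot_eq_cos_div_sin, cot_eq_cos_div_sin, div_le_div_iff₀ hsy hsx]
  have := sin_nonneg_of_nonneg_of_le_pi (sub_nonneg.2 hxy) (by linarith)
  rw [sin_sub] at this
  linarith

lemma neg_mul_rpow_sub_one_mul_sub_le_rpow_sub_rpow {p x y : ℝ} (hp : p ≤ 0) (hx : 0 < x)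
    (hxy : x ≤ y) : -p * y ^ (p - 1) * (y - x) ≤ x ^ p - y ^ p := by
  have hderiv : ∀ z ∈ Set.Icc x y, HasDerivAt (· ^ p) (p * z ^ (p - 1)) z := fun z hz =>
    hasDerivAt_rpow_const (Or.inl (hx.trans_le hz.1).ne')
  have := (convex_Icc x y).image_sub_le_mul_sub_of_deriv_le
    (fun z hz => (hderiv z hz).continuousAt.continuousWithinAt)
    (fun z hz => (hderiv z (interior_subset hz)).differentiableAt.differentiableWithinAt)
    (C := p * y ^ (p - 1)) (fun z hz => by
      rw [(hderiv z (interior_subset hz)).deriv]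
      have hz := interior_subset hz
      exact mul_le_mul_of_nonpos_left
        (rpow_le_rpow_of_nonpos (hx.trans_le hz.1) hz.2 (by linarith)) hp)
    x (Set.left_mem_Icc.2 hxy) y (Set.right_mem_Icc.2 hxy) hxy
  linarith

end Real

lemma sub_mem_Icc_of_hasDerivAt_of_antitoneOn {f g : ℝ → ℝ} {x y : ℝ} (hxy : x ≤ y)
    (hf : ∀ z ∈ Set.Icc x y, HasDerivAt f (g z) z) (hg : AntitoneOn g (Set.Icc x y)) :
    f y - f x ∈ Set.Icc (g y * (y - x)) (g x * (y - x)) := by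
  have hx : x ∈ Set.Icc x y := Set.left_mem_Icc.2 hxy
  have hy : y ∈ Set.Icc x y := Set.right_mem_Icc.2 hxy
  have hcont : ContinuousOn f (Set.Icc x y) := fun z hz =>
    (hf z hz).continuousAt.continuousWithinAt
  have hdiff : DifferentiableOn ℝ f (interior (Set.Icc x y)) := fun z hz =>
    (hf z (interior_subset hz)).differentiableAt.differentiableWithinAt
  have hderiv : ∀ z ∈ interior (Set.Icc x y), deriv f z = g z := fun z hz =>
    (hf z (interior_subset hz)).deriv
  have hge : ∀ z ∈ interior (Set.Icc x y), g y ≤ deriv f z := fun z hz => by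
    rw [hderiv z hz]
    exact hg (interior_subset hz) hy (interior_subset hz).2
  have hle : ∀ z ∈ interior (Set.Icc x y), deriv f z ≤ g x := fun z hz => by
    rw [hderiv z hz]
    exact hg hx (interior_subset hz) (interior_subset hz).1
  exact ⟨(convex_Icc x y).mul_sub_le_image_sub_of_le_deriv hcont hdiff hge x hx y hy hxy,
    (convex_Icc x y).image_sub_le_mul_sub_of_deriv_le hcont hdiff hle x hx y hy hxy⟩

lemma exists_split_of_slope (g : ℝ → ℝ) {N : ℕ} {κ : ℝ} (hκ : 0 < κ)
    (hslope : ∀ x ∈ Set.Icc (1 : ℝ) N, ∀ y ∈ Set.Icc (1 : ℝ) N, x ≤ y →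
      κ * (y - x) ≤ g x - g y)
    (ℓ : ℝ) {Δ : ℝ} (hΔ : 0 ≤ Δ) :
    ∃ a b : ℕ, a ≤ b ∧ b ≤ N ∧ (b : ℝ) - a ≤ 1 + 2 * Δ / κ ∧
      (∀ x ∈ Set.Icc (1 : ℝ) a, ℓ + Δ ≤ g x) ∧
      ∀ x ∈ Set.Icc ((b + 1 : ℕ) : ℝ) N, g x ≤ ℓ - Δ := by
  classical
  have hg : AntitoneOn g (Set.Icc 1 N) := fun x hx y hy hxy => by
    nlinarith [hslope x hx y hy hxy]
  set a := Nat.findGreatest (fun n => ℓ + Δ < g n) N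
  set b := Nat.findGreatest (fun n => ℓ - Δ ≤ g n) N
  have hab : a ≤ b := Nat.findGreatest_mono (fun n hn => by linarith) le_rfl
  have hbN : b ≤ N := Nat.findGreatest_le N
  refine ⟨a, b, hab, hbN, ?_, fun x hx => ?_, fun x hx => ?_⟩
  · rcases hab.eq_or_lt with hab' | hab'
    · rw [hab', sub_self]; positivity
    have ha : g (a + 1 : ℕ) ≤ ℓ + Δ :=
      not_lt.1 (Nat.findGreatest_is_greatest (Nat.lt_succ_self a) (by omega : a + 1 ≤ N))
    have hb : ℓ - Δ ≤ g b :=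
      Nat.findGreatest_of_ne_zero (P := fun n : ℕ => ℓ - Δ ≤ g n) rfl (by omega)
    have hκ' := hslope (a + 1 : ℕ) ⟨by simp, by exact_mod_cast (by omega : a + 1 ≤ N)⟩ b
      ⟨by exact_mod_cast (by omega : 1 ≤ b), by exact_mod_cast hbN⟩ (by exact_mod_cast hab')
    rw [← sub_le_iff_le_add', le_div_iff₀ hκ]
    push_cast at hκ' ha
    linarith
  · have h1a : (1 : ℝ) ≤ a := hx.1.trans hx.2
    have haN : (a : ℝ) ≤ N := by exact_mod_cast hab.trans hbN
    have ha : ℓ + Δ < g a :=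
      Nat.findGreatest_of_ne_zero rfl (by exact_mod_cast (by linarith : (a : ℝ) ≠ 0))
    linarith [hg ⟨hx.1, hx.2.trans haN⟩ ⟨h1a, haN⟩ hx.2]
  · have hbN' : b + 1 ≤ N := by exact_mod_cast hx.1.trans hx.2
    have hb : g (b + 1 : ℕ) < ℓ - Δ :=
      not_le.1 (Nat.findGreatest_is_greatest (Nat.lt_succ_self b) hbN')
    have hb1 : (1 : ℝ) ≤ (b + 1 : ℕ) := by simp
    linarith [hg ⟨hb1, by exact_mod_cast hbN'⟩ ⟨hb1.trans hx.1, hx.2⟩ hx.1]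

namespace Finset

lemma norm_sum_Ico_smul_le {R E : Type*} [SeminormedRing R] [SeminormedAddCommGroup E]
    [Module R E] [IsBoundedSMul R E] (f : ℕ → R) (g : ℕ → E) {m n : ℕ} (hmn : m < n)
    {M : ℝ} (hG : ∀ k, ‖∑ i ∈ range k, g i‖ ≤ M) :
    ‖∑ i ∈ Ico m n, f i • g i‖ ≤
      (‖f (n - 1)‖ + ‖f m‖ + ∑ i ∈ Ico m (n - 1), ‖f (i + 1) - f i‖) * M := by
  have hsmul (a : R) (k : ℕ) : ‖a • ∑ i ∈ range k, g i‖ ≤ ‖a‖ * M :=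
    (norm_smul_le _ _).trans (mul_le_mul_of_nonneg_left (hG k) (norm_nonneg a))
  rw [sum_Ico_by_parts f g hmn, add_mul, add_mul, sum_mul]
  exact (norm_sub_le _ _).trans (add_le_add ((norm_sub_le _ _).trans
    (add_le_add (hsmul _ _) (hsmul _ _))) ((norm_sum_le _ _).trans
    (sum_le_sum fun i _ => hsmul _ _)))

end Finset

namespace ExponentialSum

noncomputable def e (x : ℝ) : ℂ := Complex.exp (2 * π * Complex.I * x)

lemma norm_e (x : ℝ) : ‖e x‖ = 1 := by
  rw [e, show (2 * π * Complex.I * x : ℂ) = (2 * π * x : ℝ) * Complex.I by push_cast; ring]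
  exact Complex.norm_exp_ofReal_mul_I _

lemma e_add (x y : ℝ) : e (x + y) = e x * e y := by
  rw [e, e, e, ← Complex.exp_add]
  push_cast
  ring_nf

lemma e_intCast (m : ℤ) : e m = 1 := by
  rw [e, show 2 * π * Complex.I * ((m : ℝ) : ℂ) = m * (2 * π * Complex.I) by push_cast; ring]
  exact Complex.exp_int_mul_two_pi_mul_I m

lemma norm_sum_e_le_card (s : Finset ℕ) (f : ℕ → ℝ) : ‖∑ n ∈ s, e (f n)‖ ≤ #s :=
  (norm_sum_le _ _).trans (by simp [norm_e])

noncomputable def cotWeight (t : ℝ) : ℂ := -(1 / 2) - Complex.I / 2 * cot (π * t)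

lemma e_sub_one_mul_cotWeight {t : ℝ} (ht : sin (π * t) ≠ 0) :
    (e t - 1) * cotWeight t = 1 := by
  have key (c s : ℂ) (hs : s ≠ 0) (hcs : s ^ 2 + c ^ 2 = 1) :
      ((c + s * Complex.I) * (c + s * Complex.I) - 1) *
        (-(1 / 2) - Complex.I / 2 * (c / s)) = 1 := by
    field_simp
    linear_combination (s - c * Complex.I) * hcs +
      (-s ^ 3 - c * s ^ 2 * Complex.I - 2 * c ^ 2 * s) * Complex.I_sq
  rw [e, cotWeight, show (2 * π * Complex.I * t : ℂ) =
      (π * t : ℝ) * Complex.I + (π * t : ℝ) * Complex.I by push_cast; ring,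
    Complex.exp_add, Complex.exp_mul_I, cot_eq_cos_div_sin, Complex.ofReal_div,
    Complex.ofReal_cos, Complex.ofReal_sin]
  exact key _ _ (by exact_mod_cast ht) (by exact_mod_cast sin_sq_add_cos_sq (π * t))

lemma norm_cotWeight_le {Δ t : ℝ} (hΔ : 0 < Δ) (h₁ : Δ ≤ t) (h₂ : t ≤ 1 - Δ) :
    ‖cotWeight t‖ ≤ 1 / 2 + 1 / (4 * Δ) := by
  have hcot := abs_cot_pi_mul_le hΔ h₁ h₂
  calc ‖cotWeight t‖
      ≤ ‖(-(1 / 2) : ℂ)‖ + ‖Complex.I / 2 * cot (π * t)‖ := norm_sub_le _ _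
    _ = 1 / 2 + |cot (π * t)| / 2 := by
      rw [norm_neg, norm_mul, Complex.norm_real, norm_eq_abs,
        show ‖(1 / 2 : ℂ)‖ = 1 / 2 by simp, show ‖Complex.I / 2‖ = 1 / 2 by simp]
      ring
    _ ≤ 1 / 2 + 1 / (4 * Δ) := by linarith [show 1 / (4 * Δ) = 1 / (2 * Δ) / 2 by ring]

lemma norm_cotWeight_sub_cotWeight (s t : ℝ) :
    ‖cotWeight s - cotWeight t‖ = |cot (π * s) - cot (π * t)| / 2 := by
  rw [cotWeight, cotWeight, show ∀ a b : ℂ, -(1 / 2) - Complex.I / 2 * a - (-(1 / 2) -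
    Complex.I / 2 * b) = -(Complex.I / 2) * (a - b) by intros; ring, ← Complex.ofReal_sub,
    norm_mul, norm_neg, Complex.norm_real, norm_eq_abs, show ‖Complex.I / 2‖ = 1 / 2 by simp]
  ring

lemma sum_norm_cotWeight_sub_le (t : ℕ → ℝ) {Δ : ℝ} (hΔ : 0 < Δ) {A B : ℕ}
    (hAB : A ≤ B) (hbound : ∀ n ∈ Icc A B, Δ ≤ t n ∧ t n ≤ 1 - Δ)
    (hanti : ∀ n ∈ Ico A B, t (n + 1) ≤ t n) :
    ∑ i ∈ Ico A B, ‖cotWeight (t (i + 1)) - cotWeight (t i)‖ ≤ 1 / (2 * Δ) := by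
  have hterm : ∀ i ∈ Ico A B, ‖cotWeight (t (i + 1)) - cotWeight (t i)‖ =
      (cot (π * t (i + 1)) - cot (π * t i)) / 2 := by
    intro i hi
    obtain ⟨hi₁, hi₂⟩ := mem_Ico.1 hi
    have h₁ := (hbound (i + 1) (mem_Icc.2 ⟨by omega, hi₂⟩)).1
    have h₂ := (hbound i (mem_Icc.2 ⟨hi₁, hi₂.le⟩)).2
    rw [norm_cotWeight_sub_cotWeight, abs_of_nonneg (sub_nonneg.2 (cot_le_cot
      (by nlinarith [pi_pos]) (mul_le_mul_of_nonneg_left (hanti i hi) pi_pos.le)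
      (by nlinarith [pi_pos])))]
  rw [sum_congr rfl hterm, ← sum_div, sum_Ico_sub (fun i => cot (π * t i)) hAB]
  have hB := abs_le.1 (abs_cot_pi_mul_le hΔ (hbound B (right_mem_Icc.2 hAB)).1
    (hbound B (right_mem_Icc.2 hAB)).2)
  have hA := abs_le.1 (abs_cot_pi_mul_le hΔ (hbound A (left_mem_Icc.2 hAB)).1
    (hbound A (left_mem_Icc.2 hAB)).2)
  linarith

theorem norm_sum_e_Icc_le_of_antitone_diff (f : ℕ → ℝ) (m : ℤ) {Δ : ℝ} (hΔ : 0 < Δ)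
    {A B : ℕ}
    (hbound : ∀ n ∈ Ico A B, Δ ≤ f (n + 1) - f n - m ∧ f (n + 1) - f n - m ≤ 1 - Δ)
    (hanti : ∀ n ∈ Ico A (B - 1), f (n + 2) - f (n + 1) ≤ f (n + 1) - f n) :
    ‖∑ n ∈ Icc A B, e (f n)‖ ≤ 3 + 2 / Δ := by
  rcases le_or_gt B A with hBA | hAB
  · have hcard : (#(Icc A B) : ℝ) ≤ 1 := by
      exact_mod_cast (show #(Icc A B) ≤ 1 by simp only [Nat.card_Icc]; omega)
    have : (0 : ℝ) ≤ 2 / Δ := by positivity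
    linarith [norm_sum_e_le_card (Icc A B) f]
  set t : ℕ → ℝ := fun n => f (n + 1) - f n - m
  have hstep : ∀ n ∈ Ico A B, cotWeight (t n) • (e (f (n + 1)) - e (f n)) = e (f n) := by
    intro n hn
    have hsin : sin (π * t n) ≠ 0 := by
      linarith [two_mul_le_sin_pi_mul hΔ.le (hbound n hn).1 (hbound n hn).2]
    rw [smul_eq_mul, show f (n + 1) = f n + t n + m by ring, e_add, e_add, e_intCast, mul_one,
      ← mul_sub_one, mul_comm, mul_assoc, e_sub_one_mul_cotWeight hsin, mul_one]
  have hvar := sum_norm_cotWeight_sub_le t hΔ (Nat.le_sub_one_of_lt hAB)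
    (fun n hn => hbound n (by simp only [mem_Icc, mem_Ico] at hn ⊢; omega))
    (fun n hn => by simpa [t, add_assoc] using hanti n hn)
  have hpartial : ∀ k, ‖∑ i ∈ range k, (e (f (i + 1)) - e (f i))‖ ≤ 2 := by
    intro k
    rw [sum_range_sub (fun i => e (f i))]
    exact (norm_sub_le _ _).trans (by rw [norm_e, norm_e]; norm_num)
  have hw (n : ℕ) (hn : n ∈ Ico A B) : ‖cotWeight (t n)‖ ≤ 1 / 2 + 1 / (4 * Δ) :=
    norm_cotWeight_le hΔ (hbound n hn).1 (hbound n hn).2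
  calc ‖∑ n ∈ Icc A B, e (f n)‖
      = ‖e (f B) + ∑ n ∈ Ico A B, cotWeight (t n) • (e (f (n + 1)) - e (f n))‖ := by
        rw [← Ico_add_one_right_eq_Icc, sum_Ico_succ_top hAB.le, add_comm, sum_congr rfl hstep]
    _ ≤ 1 + (‖cotWeight (t (B - 1))‖ + ‖cotWeight (t A)‖ +
          ∑ i ∈ Ico A (B - 1), ‖cotWeight (t (i + 1)) - cotWeight (t i)‖) * 2 :=
        (norm_add_le _ _).trans (add_le_add (norm_e _).le
          (norm_sum_Ico_smul_le _ _ hAB hpartial))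
    _ ≤ 1 + ((1 / 2 + 1 / (4 * Δ)) + (1 / 2 + 1 / (4 * Δ)) + 1 / (2 * Δ)) * 2 := by
        gcongr
        exacts [hw _ (mem_Ico.2 ⟨by omega, by omega⟩), hw _ (mem_Ico.2 ⟨le_rfl, hAB⟩)]
    _ = 3 + 2 / Δ := by field_simp; ring

theorem norm_sum_e_Icc_le_of_hasDerivAt (f g : ℝ → ℝ) (m : ℤ) {Δ : ℝ} (hΔ : 0 < Δ)
    {A B : ℕ} (hf : ∀ x ∈ Set.Icc (A : ℝ) B, HasDerivAt f (g x) x)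
    (hg : AntitoneOn g (Set.Icc (A : ℝ) B))
    (hbound : ∀ x ∈ Set.Icc (A : ℝ) B, m + Δ ≤ g x ∧ g x ≤ m + 1 - Δ) :
    ‖∑ n ∈ Icc A B, e (f n)‖ ≤ 3 + 2 / Δ := by
  have hsub {n : ℕ} (hn : n ∈ Ico A B) : Set.Icc (n : ℝ) (n + 1) ⊆ Set.Icc (A : ℝ) B := by
    obtain ⟨h₁, h₂⟩ := mem_Ico.1 hn
    exact Set.Icc_subset_Icc (by exact_mod_cast h₁) (by exact_mod_cast h₂)
  have hstep {n : ℕ} (hn : n ∈ Ico A B) : f (n + 1) - f n ∈ Set.Icc (g (n + 1)) (g n) := by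
    simpa using sub_mem_Icc_of_hasDerivAt_of_antitoneOn (by linarith)
      (fun z hz => hf z (hsub hn hz)) (hg.mono (hsub hn))
  refine norm_sum_e_Icc_le_of_antitone_diff (fun n => f n) m hΔ (fun n hn => ?_) (fun n hn => ?_)
  · have h₁ := hbound _ (hsub hn (Set.left_mem_Icc.2 (by linarith)))
    have h₂ := hbound _ (hsub hn (Set.right_mem_Icc.2 (by linarith)))
    push_cast
    constructor <;> linarith [(hstep hn).1, (hstep hn).2]
  · have h₁ := hstep (Ico_subset_Ico_right (Nat.sub_le B 1) hn)
    have h₂ := hstep (show n + 1 ∈ Ico A B by simp only [mem_Ico] at hn ⊢; omega)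
    push_cast at h₁ h₂ ⊢
    rw [add_assoc, one_add_one_eq_two] at h₂
    linarith [h₁.1, h₂.2]

theorem norm_sum_e_Icc_le_of_slope (f g : ℝ → ℝ) {N : ℕ} {Δ κ : ℝ} (hΔ : 0 < Δ)
    (hκ : 0 < κ) (hf : ∀ x ∈ Set.Icc (1 : ℝ) N, HasDerivAt f (g x) x)
    (hslope : ∀ x ∈ Set.Icc (1 : ℝ) N, ∀ y ∈ Set.Icc (1 : ℝ) N, x ≤ y →
      κ * (y - x) ≤ g x - g y)
    (hrange : g 1 - g N ≤ 1 - 2 * Δ) :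
    ‖∑ n ∈ Icc 1 N, e (f n)‖ ≤ 7 + 4 / Δ + 2 * Δ / κ := by
  have hg : AntitoneOn g (Set.Icc 1 N) := fun x hx y hy hxy => by
    nlinarith [hslope x hx y hy hxy]
  set k : ℤ := ⌈g N - Δ⌉
  have hval (x : ℝ) (hx : x ∈ Set.Icc (1 : ℝ) N) :
      k - 1 + Δ ≤ g x ∧ g x ≤ k + 1 - Δ := by
    have h₁ := hg hx (Set.right_mem_Icc.2 (hx.1.trans hx.2)) hx.2
    have h₂ := hg (Set.left_mem_Icc.2 (hx.1.trans hx.2)) hx hx.1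
    constructor <;> linarith [Int.le_ceil (g N - Δ), Int.ceil_lt_add_one (g N - Δ)]
  obtain ⟨a, b, hab, hbN, hwindow, hlow, hhigh⟩ := exists_split_of_slope g hκ hslope k hΔ.le
  have hsplit : ∑ n ∈ Icc 1 N, e (f n) =
      ∑ n ∈ Icc 1 a, e (f n) + ∑ n ∈ Ioc a b, e (f n) +
        ∑ n ∈ Icc (b + 1) N, e (f n) := by
    have hIcc (n : ℕ) : Icc 1 n = Ioc 0 n := Icc_add_one_left_eq_Ioc 0 n
    rw [Icc_add_one_left_eq_Ioc, hIcc, hIcc, sum_Ioc_consecutive _ (Nat.zero_le a) hab,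
      sum_Ioc_consecutive _ (Nat.zero_le b) hbN]
  have hS₁ : ‖∑ n ∈ Icc 1 a, e (f n)‖ ≤ 3 + 2 / Δ := by
    have hsub : Set.Icc ((1 : ℕ) : ℝ) a ⊆ Set.Icc 1 N :=
      Set.Icc_subset_Icc (by simp) (by exact_mod_cast hab.trans hbN)
    exact norm_sum_e_Icc_le_of_hasDerivAt f g k hΔ (fun x hx => hf x (hsub hx)) (hg.mono hsub)
      fun x hx => ⟨hlow x (by simpa using hx), (hval x (hsub hx)).2⟩
  have hS₂ : ‖∑ n ∈ Ioc a b, e (f n)‖ ≤ 1 + 2 * Δ / κ :=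
    (norm_sum_e_le_card _ _).trans (by rwa [Nat.card_Ioc, Nat.cast_sub hab])
  have hS₃ : ‖∑ n ∈ Icc (b + 1) N, e (f n)‖ ≤ 3 + 2 / Δ := by
    have hsub : Set.Icc ((b + 1 : ℕ) : ℝ) N ⊆ Set.Icc 1 N :=
      Set.Icc_subset_Icc (by simp) le_rfl
    refine norm_sum_e_Icc_le_of_hasDerivAt f g (k - 1) hΔ (fun x hx => hf x (hsub hx))
      (hg.mono hsub) fun x hx => ?_
    push_cast
    constructor <;> linarith [hval x (hsub hx), hhigh x hx]
  calc ‖∑ n ∈ Icc 1 N, e (f n)‖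
      ≤ ‖∑ n ∈ Icc 1 a, e (f n)‖ + ‖∑ n ∈ Ioc a b, e (f n)‖ +
          ‖∑ n ∈ Icc (b + 1) N, e (f n)‖ := by
        rw [hsplit]; exact norm_add₃_le
    _ ≤ (3 + 2 / Δ) + (1 + 2 * Δ / κ) + (3 + 2 / Δ) :=
        add_le_add (add_le_add hS₁ hS₂) hS₃
    _ = 7 + 4 / Δ + 2 * Δ / κ := by ring

theorem norm_sum_e_rpow_add_mul_le {δ : ℝ} (hδ0 : 0 < δ) (hδ1 : δ < 1) (θ : ℝ) {N : ℕ}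
    (hN : 0 < N) {Δ : ℝ} (hΔ : 0 < Δ) (hΔδ : 2 * Δ ≤ 1 - δ) :
    ‖∑ k ∈ Icc 1 N, e ((k : ℝ) ^ δ + θ * k)‖ ≤
      7 + 4 / Δ + 2 * Δ * (N : ℝ) ^ (2 - δ) / (δ * (1 - δ)) := by
  have hδ : 0 < δ * (1 - δ) := mul_pos hδ0 (sub_pos.2 hδ1)
  have hκ : 0 < δ * (1 - δ) / (N : ℝ) ^ (2 - δ) := by positivity
  convert norm_sum_e_Icc_le_of_slope (fun x => x ^ δ + θ * x) (fun x => δ * x ^ (δ - 1) + θ)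
    hΔ hκ (fun x hx => ?_) (fun x hx y hy hxy => ?_) ?_ using 2
  · field_simp
  · exact (hasDerivAt_rpow_const (Or.inl (by linarith [hx.1]))).add
      ((hasDerivAt_id x).const_mul θ) |>.congr_deriv (by simp)
  · have h₁ := neg_mul_rpow_sub_one_mul_sub_le_rpow_sub_rpow (by linarith : δ - 1 ≤ 0)
      (by linarith [hx.1]) hxy
    have h₂ : ((N : ℝ) ^ (2 - δ))⁻¹ ≤ y ^ (δ - 1 - 1) := by
      rw [← rpow_neg (by positivity), show -(2 - δ) = δ - 1 - 1 by ring]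
      exact rpow_le_rpow_of_nonpos (by linarith [hy.1]) hy.2 (by linarith)
    have h₃ := mul_le_mul_of_nonneg_left h₂ (mul_nonneg hδ.le (sub_nonneg.2 hxy))
    have h₄ := mul_le_mul_of_nonneg_left h₁ hδ0.le
    rw [div_eq_mul_inv]
    linarith
  · have : 0 ≤ (N : ℝ) ^ (δ - 1) := by positivity
    simp only [one_rpow]
    nlinarith

end ExponentialSum

open ExponentialSum

/-- For `0 < δ < 1`, `|∑_{k=1}^N e^{2iπ(k^δ + θk)}| ≤ C N^{1−δ/2}` uniformly in `θ`. -/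
theorem stmt_13 (δ : ℝ) (hδ0 : 0 < δ) (hδ1 : δ < 1) :
    ∃ C > 0, ∀ N : ℕ, 2 ≤ N → ∀ θ : ℝ,
      ‖∑ k ∈ Finset.Icc 1 N,
          Complex.exp (2 * Real.pi * Complex.I * (((k : ℝ) ^ δ + θ * k : ℝ) : ℂ))‖
        ≤ C * (N : ℝ) ^ (1 - δ / 2) := by
  have hδ : 0 < δ * (1 - δ) := mul_pos hδ0 (sub_pos.2 hδ1)
  refine ⟨11 + 2 / (δ * (1 - δ)), by positivity, fun N hN θ => ?_⟩
  change ‖∑ k ∈ Icc 1 N, e ((k : ℝ) ^ δ + θ * k)‖ ≤ _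
  have hN1 : (1 : ℝ) ≤ N := by exact_mod_cast (by omega : 1 ≤ N)
  set P := (N : ℝ) ^ (1 - δ / 2)
  have hP1 : 1 ≤ P := one_le_rpow hN1 (by linarith)
  have hPsq : (N : ℝ) ^ (2 - δ) = P ^ 2 := by
    rw [← rpow_natCast, ← rpow_mul (by positivity)]
    ring_nf
  rcases lt_or_ge (1 - δ) (2 / P) with hsmall | hlarge
  · have hNP : (N : ℝ) ≤ P ^ 2 := by
      rw [← hPsq]
      simpa using rpow_le_rpow_of_exponent_le hN1 (by linarith : 1 ≤ 2 - δ)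
    have hP : P ≤ 2 / (δ * (1 - δ)) := by
      rw [lt_div_iff₀ (by positivity)] at hsmall
      rw [le_div_iff₀ hδ]
      nlinarith
    calc ‖∑ k ∈ Icc 1 N, e ((k : ℝ) ^ δ + θ * k)‖ ≤ N := by
          simpa using norm_sum_e_le_card (Icc 1 N) (fun k => (k : ℝ) ^ δ + θ * k)
      _ ≤ P * P := by nlinarith
      _ ≤ (11 + 2 / (δ * (1 - δ))) * P := by nlinarith
  · refine (norm_sum_e_rpow_add_mul_le hδ0 hδ1 θ (by omega) (Δ := P⁻¹)
      (inv_pos.2 (by positivity)) (by rwa [← div_eq_mul_inv])).trans ?_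
    rw [div_inv_eq_mul, hPsq, show 2 * P⁻¹ * P ^ 2 / (δ * (1 - δ)) = 2 / (δ * (1 - δ)) * P by
      field_simp]
    linarith
end

section
/- For every real h ≠ 0 there is the bound sup_{θ∈ℝ} |∑_{k=1}^{N} e^{2iπ(h log k + θk)}/k| ≤ 30(|h| + 1/|h|), uniformly in N ≥ 1. -/
/-!
With `t = 2πh` and `w = e^{2πiθ}` the summands are `k^{-1+it} w^k`. Comparing `∑_{k ≤ K} k^{-1+it}`
with the integral of `x^{-1+it}`, whose primitive `x^{it}/(it)` has modulus `1/|t|`, bounds the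
untwisted partial sums by `2 + |t| + 2/|t|` uniformly in `K`. Below `K ≈ 2/|w - 1|` the twist costs
at most `K |w - 1| ≤ 2`, because `|w^k - 1| ≤ k |w - 1|`; above `K`, summation by parts against the
geometric sums `∑ w^k`, which are bounded by `2/|w - 1|`, costs at most `3 + |t|`.
-/

open Finset Complex

section MeanValue

variable {E : Type*} [NormedAddCommGroup E] [NormedSpace ℝ E]

theorem norm_image_sub_le_of_norm_deriv_le_deriv {f f' : ℝ → E} {g g' : ℝ → ℝ} {a b : ℝ}
    (hf : ∀ x ∈ Set.Icc a b, HasDerivAt f (f' x) x) (hg : ∀ x ∈ Set.Icc a b, HasDerivAt g (g' x) x)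
    (bound : ∀ x ∈ Set.Ico a b, ‖f' x‖ ≤ g' x) (hab : a ≤ b) :
    ‖f b - f a‖ ≤ g b - g a :=
  image_norm_le_of_norm_deriv_right_le_deriv_boundary' (f := fun x ↦ f x - f a)
    (B := fun x ↦ g x - g a)
    (fun x hx ↦ ((hf x hx).continuousAt.sub continuousAt_const).continuousWithinAt)
    (fun x hx ↦ ((hf x (Set.Ico_subset_Icc_self hx)).sub_const (f a)).hasDerivWithinAt)
    (by simp)
    (fun x hx ↦ ((hg x hx).continuousAt.sub continuousAt_const).continuousWithinAt)
    (fun x hx ↦ ((hg x (Set.Ico_subset_Icc_self hx)).sub_const (g a)).hasDerivWithinAt)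
    bound (Set.right_mem_Icc.2 hab)

theorem norm_sub_sub_smul_le_of_hasDerivAt {f F : ℝ → E} {a b M : ℝ} (hab : a ≤ b)
    (hF : ∀ x ∈ Set.Icc a b, HasDerivAt F (f x) x) (hM : ∀ x ∈ Set.Ico a b, ‖f x - f b‖ ≤ M) :
    ‖(F b - F a) - (b - a) • f b‖ ≤ M * (b - a) := by
  have hG : ∀ x ∈ Set.Icc a b,
      HasDerivWithinAt (fun y ↦ F y - y • f b) (f x - f b) (Set.Icc a b) x := fun x hx ↦
    (((hF x hx).sub ((hasDerivAt_id' x).smul_const (f b))).congr_deriv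
      (by rw [one_smul])).hasDerivWithinAt
  have key := norm_image_sub_le_of_norm_deriv_le_segment' hG hM b (Set.right_mem_Icc.2 hab)
  rwa [sub_smul, show F b - F a - (b • f b - a • f b) = F b - b • f b - (F a - a • f b) by abel]

end MeanValue

theorem norm_sum_Ioc_sub_le {E : Type*} [SeminormedAddCommGroup E] {f F : ℕ → E} {u : ℕ → ℝ}
    (hstep : ∀ k, 1 ≤ k → ‖f (k + 1) - (F (k + 1) - F k)‖ ≤ u k - u (k + 1))
    {K : ℕ} (hK : 1 ≤ K) :
    ‖∑ k ∈ Ioc 0 K, f k - F K‖ ≤ ‖f 1 - F 1‖ + (u 1 - u K) := by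
  induction K, hK using Nat.le_induction with
  | base => simp
  | succ K hK ih =>
    rw [sum_Ioc_succ_top (Nat.zero_le K)]
    calc ‖∑ k ∈ Ioc 0 K, f k + f (K + 1) - F (K + 1)‖
        = ‖(∑ k ∈ Ioc 0 K, f k - F K) + (f (K + 1) - (F (K + 1) - F K))‖ := by
          congr 1; abel
      _ ≤ ‖f 1 - F 1‖ + (u 1 - u K) + (u K - u (K + 1)) :=
          (norm_add_le _ _).trans (add_le_add ih (hstep K hK))
      _ = ‖f 1 - F 1‖ + (u 1 - u (K + 1)) := by ring

theorem sum_Ioc_le_sub_of_le_sub {a u : ℕ → ℝ} {m : ℕ} (h : ∀ i, m < i → a i ≤ u i - u (i + 1))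
    {n : ℕ} (hmn : m ≤ n) : ∑ i ∈ Ioc m n, a i ≤ u (m + 1) - u (n + 1) := by
  induction n, hmn using Nat.le_induction with
  | base => simp
  | succ n hmn ih =>
    rw [sum_Ioc_succ_top hmn]
    linarith [h (n + 1) (Nat.lt_succ_of_le hmn)]

theorem norm_sum_Ioc_smul_le {R M : Type*} [NormedRing R] [NormedAddCommGroup M] [Module R M]
    [IsBoundedSMul R M] {f : ℕ → R} {g : ℕ → M} {A : ℝ} (hg : ∀ n, ‖∑ i ∈ range n, g i‖ ≤ A)
    {m n : ℕ} (hmn : m < n) :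
    ‖∑ i ∈ Ioc m n, f i • g i‖
      ≤ A * (‖f n‖ + ‖f (m + 1)‖ + ∑ i ∈ Ioc m (n - 1), ‖f (i + 1) - f i‖) := by
  rw [sum_Ioc_by_parts f g hmn, mul_add, mul_add, mul_sum]
  refine (norm_sub_le _ _).trans (add_le_add ((norm_sub_le _ _).trans (add_le_add ?_ ?_)) ?_)
  · exact (norm_smul_le _ _).trans (by rw [mul_comm]; gcongr; exact hg _)
  · exact (norm_smul_le _ _).trans (by rw [mul_comm]; gcongr; exact hg _)
  · refine (norm_sum_le _ _).trans (sum_le_sum fun i _ ↦ (norm_smul_le _ _).trans ?_)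
    rw [mul_comm]; gcongr; exact hg _

theorem norm_geom_sum_le {𝕜 : Type*} [NormedField 𝕜] {w : 𝕜} (hw : ‖w‖ ≤ 1) (hw1 : w ≠ 1)
    (n : ℕ) : ‖∑ i ∈ range n, w ^ i‖ ≤ 2 / ‖w - 1‖ := by
  rw [geom_sum_eq hw1, norm_div]
  gcongr
  calc ‖w ^ n - 1‖ ≤ ‖w‖ ^ n + 1 := by simpa using norm_sub_le (w ^ n) 1
    _ ≤ 2 := by linarith [pow_le_one₀ (norm_nonneg w) hw (n := n)]

theorem norm_pow_sub_one_le {R : Type*} [NormedRing R] [NormOneClass R] {w : R} (hw : ‖w‖ ≤ 1)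
    (k : ℕ) : ‖w ^ k - 1‖ ≤ k * ‖w - 1‖ := by
  rw [← mul_geom_sum]
  refine (norm_mul_le _ _).trans ?_
  rw [mul_comm]
  gcongr
  refine (norm_sum_le _ _).trans ?_
  simpa using sum_le_sum fun i (_ : i ∈ range k) ↦
    (norm_pow_le w i).trans (pow_le_one₀ (norm_nonneg w) hw)

/-- `twistInv t x = x ^ (-1 + i t)` for `x > 0`. -/
noncomputable def twistInv (t x : ℝ) : ℂ := cexp (↑(t * Real.log x) * I) / x

noncomputable def twistInvPrimitive (t x : ℝ) : ℂ := cexp (↑(t * Real.log x) * I) / (t * I)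

theorem norm_twistInv (t x : ℝ) : ‖twistInv t x‖ = |x|⁻¹ := by
  rw [twistInv, norm_div, norm_exp_ofReal_mul_I, norm_real, Real.norm_eq_abs, one_div]

theorem norm_twistInvPrimitive (t x : ℝ) : ‖twistInvPrimitive t x‖ = |t|⁻¹ := by
  rw [twistInvPrimitive, norm_div, norm_exp_ofReal_mul_I, norm_mul, norm_I, mul_one, norm_real,
    Real.norm_eq_abs, one_div]

theorem hasDerivAt_cexp_mul_log_mul_I (t : ℝ) {x : ℝ} (hx : x ≠ 0) :
    HasDerivAt (fun y : ℝ ↦ cexp (↑(t * Real.log y) * I))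
      (cexp (↑(t * Real.log x) * I) * (↑(t * x⁻¹) * I)) x :=
  ((((Real.hasDerivAt_log hx).const_mul t).ofReal_comp).mul_const I).cexp

theorem hasDerivAt_twistInvPrimitive {t x : ℝ} (ht : t ≠ 0) (hx : x ≠ 0) :
    HasDerivAt (twistInvPrimitive t) (twistInv t x) x := by
  refine ((hasDerivAt_cexp_mul_log_mul_I t hx).div_const _).congr_deriv ?_
  have : (t : ℂ) ≠ 0 := ofReal_ne_zero.2 ht
  rw [twistInv]
  push_cast
  field_simp

theorem hasDerivAt_twistInv (t : ℝ) {x : ℝ} (hx : x ≠ 0) :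
    HasDerivAt (twistInv t) (cexp (↑(t * Real.log x) * I) * (t * I - 1) / (x : ℂ) ^ 2) x := by
  refine ((hasDerivAt_cexp_mul_log_mul_I t hx).div (hasDerivAt_id x).ofReal_comp
    (ofReal_ne_zero.2 hx)).congr_deriv ?_
  have : (x : ℂ) ≠ 0 := ofReal_ne_zero.2 hx
  simp only [id]
  push_cast
  field_simp

/-- The derivative of `twistInv t` has norm at most `(1 + |t|) / x ^ 2`, the derivative of
`-(1 + |t|) / x`. -/
theorem norm_twistInv_sub_le (t : ℝ) {x y : ℝ} (hx : 0 < x) (hxy : x ≤ y) :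
    ‖twistInv t y - twistInv t x‖ ≤ (1 + |t|) * (x⁻¹ - y⁻¹) := by
  have hpos : ∀ z ∈ Set.Icc x y, z ≠ 0 := fun z hz ↦ (hx.trans_le hz.1).ne'
  have key := norm_image_sub_le_of_norm_deriv_le_deriv (g := fun z ↦ -(1 + |t|) * z⁻¹)
    (fun z hz ↦ hasDerivAt_twistInv t (hpos z hz))
    (fun z hz ↦ (hasDerivAt_inv (hpos z hz)).const_mul _) ?_ hxy
  · linarith
  intro z hz
  have hz0 : 0 < z := hx.trans_le hz.1
  have hnum : ‖(t : ℂ) * I - 1‖ ≤ 1 + |t| := by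
    simpa [add_comm] using norm_sub_le ((t : ℂ) * I) 1
  rw [norm_div, norm_mul, norm_exp_ofReal_mul_I, one_mul, norm_pow, norm_real,
    Real.norm_of_nonneg hz0.le, neg_mul_neg, div_eq_mul_inv]
  gcongr

theorem norm_twistInv_step_le {t : ℝ} (ht : t ≠ 0) {a : ℝ} (ha : 0 < a) :
    ‖twistInv t (a + 1) - (twistInvPrimitive t (a + 1) - twistInvPrimitive t a)‖
      ≤ (1 + |t|) * (a⁻¹ - (a + 1)⁻¹) := by
  have key := norm_sub_sub_smul_le_of_hasDerivAt (M := (1 + |t|) * (a⁻¹ - (a + 1)⁻¹))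
    (by linarith : a ≤ a + 1)
    (fun x hx ↦ hasDerivAt_twistInvPrimitive ht (ha.trans_le hx.1).ne')
    (fun x hx ↦ ?_)
  · rwa [add_sub_cancel_left, one_smul, mul_one, norm_sub_rev] at key
  rw [norm_sub_rev]
  refine (norm_twistInv_sub_le t (ha.trans_le hx.1) hx.2.le).trans ?_
  gcongr
  exact hx.1

theorem norm_sum_twistInv_le {t : ℝ} (ht : t ≠ 0) (K : ℕ) :
    ‖∑ k ∈ Ioc 0 K, twistInv t k‖ ≤ 2 + |t| + 2 / |t| := by
  rcases Nat.eq_zero_or_pos K with rfl | hK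
  · simp only [Ioc_self, sum_empty, norm_zero]
    positivity
  have key := norm_sum_Ioc_sub_le (f := fun k : ℕ ↦ twistInv t k)
    (F := fun k : ℕ ↦ twistInvPrimitive t k) (u := fun k : ℕ ↦ (1 + |t|) * (k : ℝ)⁻¹)
    (fun k hk ↦ by simpa [mul_sub] using norm_twistInv_step_le ht (a := k) (by positivity)) hK
  have hstart : ‖twistInv t 1 - twistInvPrimitive t 1‖ ≤ 1 + |t|⁻¹ := by
    simpa [norm_twistInv, norm_twistInvPrimitive] using
      norm_sub_le (twistInv t 1) (twistInvPrimitive t 1)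
  have hK : 0 ≤ (1 + |t|) * (K : ℝ)⁻¹ := by positivity
  simp only [Nat.cast_one, inv_one, mul_one] at key
  calc ‖∑ k ∈ Ioc 0 K, twistInv t k‖
      ≤ ‖∑ k ∈ Ioc 0 K, twistInv t k - twistInvPrimitive t K‖ + ‖twistInvPrimitive t K‖ :=
        norm_le_norm_sub_add _ _
    _ ≤ 2 + |t| + 2 / |t| := by
        rw [norm_twistInvPrimitive, div_eq_mul_inv]
        linarith

theorem norm_sum_twistInv_mul_pow_le_add {t : ℝ} (ht : t ≠ 0) {w : ℂ} (hw : ‖w‖ = 1) (K : ℕ) :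
    ‖∑ k ∈ Ioc 0 K, twistInv t k * w ^ k‖ ≤ 2 + |t| + 2 / |t| + K * ‖w - 1‖ := by
  have hsplit : ∑ k ∈ Ioc 0 K, twistInv t k * w ^ k
      = ∑ k ∈ Ioc 0 K, twistInv t k + ∑ k ∈ Ioc 0 K, twistInv t k * (w ^ k - 1) := by
    rw [← sum_add_distrib]
    exact sum_congr rfl fun k _ ↦ by ring
  have herr : ∀ k ∈ Ioc 0 K, ‖twistInv t k * (w ^ k - 1)‖ ≤ ‖w - 1‖ := by
    intro k hk
    have hk : (0 : ℝ) < k := by exact_mod_cast (mem_Ioc.1 hk).1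
    rw [norm_mul, norm_twistInv, abs_of_pos hk, inv_mul_le_iff₀ hk]
    exact norm_pow_sub_one_le hw.le k
  rw [hsplit]
  refine (norm_add_le _ _).trans
    (add_le_add (norm_sum_twistInv_le ht K) ((norm_sum_le _ _).trans ?_))
  simpa using sum_le_sum herr

theorem norm_sum_Ioc_twistInv_mul_pow_le (t : ℝ) {w : ℂ} (hw : ‖w‖ = 1) (hw1 : w ≠ 1) {K N : ℕ}
    (hKN : K < N) :
    ‖∑ k ∈ Ioc K N, twistInv t k * w ^ k‖ ≤ 2 / ‖w - 1‖ * ((3 + |t|) / (K + 1)) := by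
  have habel := norm_sum_Ioc_smul_le (f := fun k : ℕ ↦ twistInv t k) (g := fun k ↦ w ^ k)
    (norm_geom_sum_le hw.le hw1) hKN
  simp only [smul_eq_mul] at habel
  have hvar : ∑ i ∈ Ioc K (N - 1), ‖twistInv t ↑(i + 1) - twistInv t ↑i‖
      ≤ (1 + |t|) * ((K : ℝ) + 1)⁻¹ := by
    refine (sum_Ioc_le_sub_of_le_sub (u := fun i : ℕ ↦ (1 + |t|) * (i : ℝ)⁻¹) (fun i hi ↦ ?_)
      (Nat.le_sub_one_of_lt hKN)).trans ?_
    · have hi : (0 : ℝ) < i := by exact_mod_cast K.zero_le.trans_lt hi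
      simpa [mul_sub] using norm_twistInv_sub_le t hi (by linarith : (i : ℝ) ≤ i + 1)
    · have : 0 ≤ (1 + |t|) * ((N - 1 : ℕ) + 1 : ℝ)⁻¹ := by positivity
      push_cast
      linarith
  have hN : ‖twistInv t N‖ ≤ ((K : ℝ) + 1)⁻¹ := by
    rw [norm_twistInv, abs_of_nonneg (by positivity)]
    exact inv_anti₀ (by positivity) (by exact_mod_cast hKN)
  have hK : ‖twistInv t ↑(K + 1)‖ = ((K : ℝ) + 1)⁻¹ := by
    rw [norm_twistInv]
    push_cast
    rw [abs_of_pos (by positivity)]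
  refine habel.trans ?_
  gcongr
  rw [hK, div_eq_mul_inv]
  linarith

theorem norm_sum_twistInv_mul_pow_le {t : ℝ} (ht : t ≠ 0) {w : ℂ} (hw : ‖w‖ = 1) (N : ℕ) :
    ‖∑ k ∈ Ioc 0 N, twistInv t k * w ^ k‖ ≤ 7 + 2 * |t| + 2 / |t| := by
  by_cases hNw : N * ‖w - 1‖ ≤ 2
  · linarith [norm_sum_twistInv_mul_pow_le_add ht hw N, abs_nonneg t]
  have hw1 : w ≠ 1 := fun h ↦ hNw (by simp [h])
  have hδ : 0 < ‖w - 1‖ := norm_pos_iff.2 (sub_ne_zero.2 hw1)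
  set K := ⌊2 / ‖w - 1‖⌋₊
  have hKw : K * ‖w - 1‖ ≤ 2 := (le_div_iff₀ hδ).1 (Nat.floor_le (by positivity))
  have hKN : K < N := by
    by_contra! h
    exact hNw (le_trans (by gcongr) hKw)
  have htail : 2 / ‖w - 1‖ * ((3 + |t|) / (K + 1)) ≤ 3 + |t| := by
    rw [mul_div_assoc', div_le_iff₀ (by positivity), mul_comm]
    gcongr
    exact (Nat.lt_floor_add_one _).le
  rw [← sum_Ioc_consecutive _ (Nat.zero_le K) hKN.le]
  linarith [norm_add_le (∑ k ∈ Ioc 0 K, twistInv t k * w ^ k)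
      (∑ k ∈ Ioc K N, twistInv t k * w ^ k), norm_sum_twistInv_mul_pow_le_add ht hw K,
    norm_sum_Ioc_twistInv_mul_pow_le t hw hw1 hKN, abs_nonneg t]

theorem seven_add_le_thirty_mul {h : ℝ} (hh : h ≠ 0) :
    7 + 2 * |2 * Real.pi * h| + 2 / |2 * Real.pi * h| ≤ 30 * (|h| + 1 / |h|) := by
  have ha : 0 < |h| := abs_pos.2 hh
  have hinv : |h| * |h|⁻¹ = 1 := mul_inv_cancel₀ ha.ne'
  have hπ : |2 * Real.pi * h| = 2 * Real.pi * |h| := by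
    rw [abs_mul, abs_of_pos (by positivity : 0 < 2 * Real.pi)]
  have hinvπ : 2 / (2 * Real.pi * |h|) ≤ |h|⁻¹ := by
    rw [div_le_iff₀ (by positivity)]
    nlinarith [Real.pi_gt_three]
  rw [hπ, one_div]
  nlinarith [Real.pi_lt_four, sq_nonneg (|h| - 1), inv_pos.2 ha,
    mul_nonneg (sq_nonneg (|h| - 1)) (inv_pos.2 ha).le]

/-- Hlawka's inequality: `|∑_{k=1}^N e^{2iπ(h log k + θk)}/k| ≤ 30(|h| + 1/|h|)`. -/
theorem stmt_16 (h : ℝ) (hh : h ≠ 0) :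
    ∀ N : ℕ, 1 ≤ N → ∀ θ : ℝ,
      ‖∑ k ∈ Finset.Icc 1 N,
          Complex.exp (2 * Real.pi * Complex.I * ((h * Real.log k + θ * k : ℝ) : ℂ)) / (k : ℂ)‖
        ≤ 30 * (|h| + 1 / |h|) := by
  intro N _ θ
  have hterm : ∀ k : ℕ,
      cexp (2 * Real.pi * I * ((h * Real.log k + θ * k : ℝ) : ℂ)) / (k : ℂ)
        = twistInv (2 * Real.pi * h) k * cexp (↑(2 * Real.pi * θ) * I) ^ k := by
    intro k
    rw [twistInv, ← exp_nat_mul, div_mul_eq_mul_div, ← exp_add]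
    push_cast
    ring_nf
  rw [show Icc 1 N = Ioc 0 N from Icc_succ_left_eq_Ioc 0 N, sum_congr rfl fun k _ ↦ hterm k]
  exact (norm_sum_twistInv_mul_pow_le (mul_ne_zero (by positivity) hh)
    (norm_exp_ofReal_mul_I _) N).trans (seven_add_le_thirty_mul hh)
end
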